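/- Let y : [0,1] → ℝ be differentiable with bounded solvable derivative and y(0) = y(1) = y'(0) = y'(1) = 0. Then for every subinterval [a,b] ⊆ [0,1] with a < b, the function (1/4)·y[a,b] is differentiable, its derivative is bounded and solvable, and its solvable ranking equals that of y: |(1/4)·y[a,b]|_SV = |y|_SV. -/

import Mathlib

/-
The affine map `ψ t = a + (b - a) t` carries `[0, 1]` onto `[a, b]`, and `(1/4) y[a,b]` is
differentiable with derivative `g' = (1/4) (y' ∘ ψ⁻¹)` on `[a, b]`, extended by `0`; the boundary
conditions on `y` and `y'` make the pieces fit together. Because `g'` vanishes at `a`, `b` and off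
`[a, b]`, the discontinuities of `g'` on any set `K` are those of `g'` on `K ∩ [a, b]`, and there
`ψ` transports the discontinuities of `y'` on `ψ⁻¹ K` to those of `g'`. Hence from the first step
on the `g'`-removed sets on `[0, 1]` are the `ψ`-images of the `y'`-removed sets, and the rankings
agree. For Baire class one, the approximants of `y'` are corrected by their chords so that they
vanish at `0` and `1` and survive extension by zero. The factor `1/4` is harmless: multiplication by a nonzero constant
is a homeomorphism of `ℝ`.
-/

open Set Filter Topology

noncomputable section

/-- The set of points of `A` at which the restriction `f ↾ A` (with the subspace
topology on `A`) is discontinuous. -/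
def discSet {X Y : Type*} [TopologicalSpace X] [TopologicalSpace Y]
    (f : X → Y) (A : Set X) : Set X :=
  {x | x ∈ A ∧ ¬ ContinuousWithinAt f A x}

/-- `f` is of Baire class one on `E`: it is the pointwise limit on `E` of a
sequence of functions continuous on `E`. -/
def BaireOne {X Y : Type*} [TopologicalSpace X] [TopologicalSpace Y]
    (f : X → Y) (E : Set X) : Prop :=
  ∃ g : ℕ → X → Y, (∀ n, ContinuousOn (g n) E) ∧
    ∀ x ∈ E, Tendsto (fun n => g n x) atTop (nhds (f x))

/-- `f` is solvable on `E`: it is of Baire class one and for every closed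
`K ⊆ E` the set of discontinuity points of `f ↾ K` is closed. -/
def SolvableOn {X Y : Type*} [TopologicalSpace X] [TopologicalSpace Y]
    (f : X → Y) (E : Set X) : Prop :=
  BaireOne f E ∧ ∀ K : Set X, K ⊆ E → IsClosed K → IsClosed (discSet f K)

/-- The transfinite sequence of `f`-removed sets on `E`:
`E_0 = E`, `E_{α+1} = discSet f E_α`, and `E_λ = ⋂_{β<λ} E_β` at limits. -/
def removedSets {X Y : Type*} [TopologicalSpace X] [TopologicalSpace Y]
    (f : X → Y) (E : Set X) (α : Ordinal.{0}) : Set X :=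
  Ordinal.limitRecOn α E (fun _ S => discSet f S)
    (fun o _ ih => ⋂ (β : Ordinal.{0}) (h : β < o), ih β h)

/-- `y` is differentiable on `[0,1]` with derivative `y'` (one-sided
derivatives at the endpoints). -/
def DiffOnIcc (y y' : ℝ → ℝ) : Prop :=
  ∀ x ∈ Set.Icc (0:ℝ) 1, HasDerivWithinAt y (y' x) (Set.Icc (0:ℝ) 1) x

/-- The solvable ranking: the least ordinal `α` for which the `α`-th
`y'`-removed set on `[0,1]` is empty. -/
def solvRank (y' : ℝ → ℝ) : Ordinal.{0} :=
  sInf {α : Ordinal.{0} | removedSets y' (Set.Icc (0:ℝ) 1) α = ∅}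


/-- `f[a,b]`: the rescaled copy of `f` supported on `[a,b]`. -/
def rescale (f : ℝ → ℝ) (a b : ℝ) : ℝ → ℝ := fun x =>
  if x ∈ Set.Icc a b then (b - a) * f ((x - a) / (b - a)) else 0

/-- A set of finite sequences closed under initial segments. -/
def PrefixClosed (T : Set (List ℕ)) : Prop := ∀ s ∈ T, ∀ t : List ℕ, t <+: s → t ∈ T

/-- A well-founded tree: closed under initial segments and with no infinite branch. -/
def IsWFTree (T : Set (List ℕ)) : Prop :=
  PrefixClosed T ∧ ¬ ∃ g : ℕ → ℕ, ∀ n : ℕ, (List.range n).map g ∈ T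

/-- The `n`-th subtree `T_n = {σ : n⌢σ ∈ T}`. -/
def subtree (T : Set (List ℕ)) (n : ℕ) : Set (List ℕ) := {σ | n :: σ ∈ T}

/-- `G` is the family of functions associated to well-founded trees by the recursion
`G ∅ = 0` and `G T = base + c • Σ_n (G T_n)[a_n, b_n]` for nonempty `T`. -/
def TreeFamSpec (base : ℝ → ℝ) (c : ℝ) (a b : ℕ → ℝ)
    (G : Set (List ℕ) → ℝ → ℝ) : Prop :=
  G ∅ = (fun _ => 0) ∧
  ∀ T : Set (List ℕ), IsWFTree T → T.Nonempty → ∀ x : ℝ,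
    G T x = base x + c * ∑' n : ℕ, rescale (G (subtree T n)) (a n) (b n) x

section RemovedSets

variable {X X' Y Y' : Type*} [TopologicalSpace X] [TopologicalSpace X'] [TopologicalSpace Y]
  [TopologicalSpace Y']

theorem discSet_subset (f : X → Y) (S : Set X) : discSet f S ⊆ S := fun _ hx => hx.1

theorem discSet_congr {f g : X → Y} {S : Set X} (h : EqOn f g S) : discSet f S = discSet g S := by
  ext x
  exact and_congr_right fun hx => not_congr (continuousWithinAt_congr_of_mem h hx)

theorem discSet_comp_of_isInducing {h : Y → Y'} (hh : IsInducing h) (f : X → Y) (S : Set X) :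
    discSet (h ∘ f) S = discSet f S := by
  ext x
  simp only [discSet, mem_ofPred_eq, ← hh.continuousWithinAt_iff]

theorem continuousWithinAt_image_homeomorph_iff (e : X ≃ₜ X') (f : X' → Y) (S : Set X) (x : X) :
    ContinuousWithinAt f (e '' S) (e x) ↔ ContinuousWithinAt (f ∘ e) S x := by
  rw [ContinuousWithinAt, ContinuousWithinAt, ← e.isEmbedding.map_nhdsWithin_eq,
    tendsto_map'_iff]
  rfl

theorem discSet_image_homeomorph (e : X ≃ₜ X') (f : X' → Y) (S : Set X) :
    discSet f (e '' S) = e '' discSet (f ∘ e) S := by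
  ext x'
  obtain ⟨x, rfl⟩ := e.surjective x'
  simp only [discSet, mem_ofPred_eq, e.injective.mem_set_image,
    continuousWithinAt_image_homeomorph_iff]

theorem discSet_eq_discSet_inter_closure {f : X → Y} {U : Set X} {c : Y} (hU : IsOpen U)
    (hf : ∀ x ∉ U, f x = c) (K : Set X) : discSet f K = discSet f (K ∩ closure U) := by
  refine Subset.antisymm (fun x ⟨hxK, hx⟩ => ?_) fun x ⟨hx, hdisc⟩ =>
    ⟨hx.1, fun hc => hdisc (hc.mono inter_subset_left)⟩
  have hxU : x ∈ closure U := by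
    by_contra hxU
    have hconst : f =ᶠ[𝓝 x] fun _ => c := by
      filter_upwards [isClosed_closure.isOpen_compl.mem_nhds hxU] with z hz
      exact hf z fun hzU => hz (subset_closure hzU)
    exact hx ((continuousAt_const.congr_of_eventuallyEq hconst).continuousWithinAt)
  refine ⟨⟨hxK, hxU⟩, fun hc => hx ?_⟩
  by_cases hxU' : x ∈ U
  · exact hc.mono_of_mem_nhdsWithin
      (inter_mem_nhdsWithin K (mem_of_superset (hU.mem_nhds hxU') subset_closure))
  · have hcompl : ContinuousWithinAt f Uᶜ x := continuousWithinAt_const.congr hf (hf x hxU')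
    refine (hc.union hcompl).mono fun z hz => ?_
    by_cases hzU : z ∈ U
    exacts [Or.inl ⟨hz, subset_closure hzU⟩, Or.inr hzU]

variable (f : X → Y) (E : Set X)

theorem removedSets_zero : removedSets f E 0 = E :=
  Ordinal.limitRecOn_zero _ _ _

theorem removedSets_add_one (α : Ordinal.{0}) :
    removedSets f E (α + 1) = discSet f (removedSets f E α) :=
  Ordinal.limitRecOn_add_one _ _ _ _

theorem removedSets_limit {l : Ordinal.{0}} (hl : Order.IsSuccLimit l) :
    removedSets f E l = ⋂ (β : Ordinal.{0}) (_ : β < l), removedSets f E β :=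
  Ordinal.limitRecOn_limit _ _ _ _ hl

theorem removedSets_subset (α : Ordinal.{0}) : removedSets f E α ⊆ E := by
  induction α using Ordinal.limitRecOn with
  | zero => rw [removedSets_zero]
  | add_one α ih =>
    rw [removedSets_add_one]
    exact (discSet_subset f _).trans ih
  | limit l hl ih =>
    rw [removedSets_limit f E hl]
    exact (iInter₂_subset 0 hl.bot_lt).trans (ih 0 hl.bot_lt)

theorem removedSets_limit_eq_iInter_add_one {l : Ordinal.{0}} (hl : Order.IsSuccLimit l) :
    removedSets f E l = ⋂ (β : Ordinal.{0}) (_ : β < l), removedSets f E (β + 1) := by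
  rw [removedSets_limit f E hl]
  refine Subset.antisymm (subset_iInter₂ fun β hβ => iInter₂_subset (β + 1) (hl.add_one_lt hβ))
    (subset_iInter₂ fun β hβ => ?_)
  refine (iInter₂_subset β hβ).trans ?_
  rw [removedSets_add_one]
  exact discSet_subset f _

variable {f E}

theorem removedSets_eq_of_discSet_eq {F : Set X} (h : discSet f E = discSet f F)
    {α : Ordinal.{0}} (hα : α ≠ 0) : removedSets f E α = removedSets f F α := by
  induction α using Ordinal.limitRecOn with
  | zero => exact absurd rfl hα
  | add_one α ih =>
    rw [removedSets_add_one, removedSets_add_one]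
    rcases eq_or_ne α 0 with rfl | hα₀
    · rwa [removedSets_zero, removedSets_zero]
    · rw [ih hα₀]
  | limit l hl ih =>
    rw [removedSets_limit_eq_iInter_add_one f E hl, removedSets_limit_eq_iInter_add_one f F hl]
    exact iInter₂_congr fun β hβ =>
      ih _ (hl.add_one_lt hβ) (add_pos_of_right zero_lt_one β).ne'

theorem removedSets_image {g : X' → Y'} {e : X → X'} (he : e.Bijective)
    (h : ∀ S ⊆ E, discSet g (e '' S) = e '' discSet f S) (α : Ordinal.{0}) :
    removedSets g (e '' E) α = e '' removedSets f E α := by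
  induction α using Ordinal.limitRecOn with
  | zero => rw [removedSets_zero, removedSets_zero]
  | add_one α ih =>
    rw [removedSets_add_one, removedSets_add_one, ih, h _ (removedSets_subset f E α)]
  | limit l hl ih =>
    rw [removedSets_limit _ _ hl, removedSets_limit _ _ hl, image_iInter₂ he]
    exact iInter₂_congr ih

end RemovedSets

section BaireOne

variable {X X' Y Z : Type*} [TopologicalSpace X] [TopologicalSpace X'] [TopologicalSpace Y]
  [TopologicalSpace Z] {f : X → Y} {E : Set X}

theorem BaireOne.comp_left {h : Y → Z} (hh : Continuous h) (hf : BaireOne f E) :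
    BaireOne (h ∘ f) E := by
  obtain ⟨g, hgc, hgt⟩ := hf
  exact ⟨fun n => h ∘ g n, fun n => hh.comp_continuousOn (hgc n),
    fun x hx => (hh.tendsto _).comp (hgt x hx)⟩

theorem BaireOne.comp_right {φ : X' → X} {E' : Set X'} (hf : BaireOne f E)
    (hφ : ContinuousOn φ E') (hmaps : MapsTo φ E' E) : BaireOne (f ∘ φ) E' := by
  obtain ⟨g, hgc, hgt⟩ := hf
  exact ⟨fun n => g n ∘ φ, fun n => (hgc n).comp hφ hmaps, fun x hx => hgt (φ x) (hmaps hx)⟩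

theorem BaireOne.indicator_Icc {f : ℝ → ℝ} (hf : BaireOne f (Icc 0 1)) (h0 : f 0 = 0)
    (h1 : f 1 = 0) : BaireOne ((Icc 0 1).indicator f) univ := by
  classical
  obtain ⟨g, hgc, hgt⟩ := hf
  -- subtracting its chord makes `g n` vanish at `0` and `1`, so its extension by zero is continuous
  set g₀ : ℕ → ℝ → ℝ := fun n t => g n t - ((1 - t) * g n 0 + t * g n 1)
  refine ⟨fun n => (Icc 0 1).indicator (g₀ n), fun n => ?_, fun x _ => ?_⟩
  · show ContinuousOn ((Icc 0 1).indicator (g₀ n)) univ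
    rw [← piecewise_eq_indicator, continuousOn_univ]
    refine continuous_piecewise (fun t ht => ?_) ?_ continuousOn_const
    · rw [frontier_Icc zero_le_one] at ht
      rcases ht with rfl | rfl <;> simp [g₀]
    · rw [closure_Icc]
      exact (hgc n).sub (by fun_prop)
  · by_cases hx : x ∈ Icc 0 1
    · simp only [indicator_of_mem hx]
      have := (hgt x hx).sub (((hgt 0 (left_mem_Icc.2 zero_le_one)).const_mul (1 - x)).add
        ((hgt 1 (right_mem_Icc.2 zero_le_one)).const_mul x))
      simpa [h0, h1] using this
    · simp only [indicator_of_notMem hx]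
      exact tendsto_const_nhds

end BaireOne

theorem hasDerivAt_indicator_of_frontier {𝕜 F : Type*} [NontriviallyNormedField 𝕜]
    [NormedAddCommGroup F] [NormedSpace 𝕜 F] {f f' : 𝕜 → F} {s : Set 𝕜} (hs : IsClosed s)
    (hf : ∀ x ∈ s, HasDerivWithinAt f (f' x) s x) (h₀ : ∀ x ∈ frontier s, f x = 0)
    (h₀' : ∀ x ∈ frontier s, f' x = 0) (x : 𝕜) :
    HasDerivAt (s.indicator f) (s.indicator f' x) x := by
  have hvanish : ∀ {g : 𝕜 → F}, (∀ z ∈ frontier s, g z = 0) → ∀ z ∉ interior s,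
      s.indicator g z = 0 :=
    fun hg z hz => indicator_apply_eq_zero.2 fun hzs => hg z ⟨subset_closure hzs, hz⟩
  have hin : HasDerivWithinAt (s.indicator f) (s.indicator f' x) s x := by
    by_cases hx : x ∈ s
    · rw [indicator_of_mem hx]
      exact (hf x hx).congr (fun z hz => indicator_of_mem hz f) (indicator_of_mem hx f)
    · exact HasFDerivWithinAt.of_notMem_closure (by rwa [hs.closure_eq])
  have hout : HasDerivWithinAt (s.indicator f) (s.indicator f' x) (interior s)ᶜ x := by
    by_cases hx : x ∈ interior s
    · refine HasFDerivWithinAt.of_notMem_closure ?_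
      rwa [isOpen_interior.isClosed_compl.closure_eq, notMem_compl_iff]
    · rw [hvanish h₀' x hx]
      exact (hasDerivWithinAt_const x _ 0).congr (hvanish h₀) (hvanish h₀ x hx)
  have hcover : s ∪ (interior s)ᶜ = univ := by
    refine eq_univ_of_forall fun z => ?_
    by_cases hz : z ∈ interior s
    exacts [Or.inl (interior_subset hz), Or.inr hz]
  rw [← hasDerivWithinAt_univ, ← hcover]
  exact hin.union hout

def affineCopy (f : ℝ → ℝ) (a b : ℝ) : ℝ → ℝ :=
  fun x => (Icc 0 1).indicator f ((x - a) / (b - a))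

def unitToIcc {a b : ℝ} (hab : a < b) : ℝ ≃ₜ ℝ :=
  affineHomeomorph (b - a) a (sub_pos.2 hab).ne'

section AffineCopy

variable {f : ℝ → ℝ} {a b : ℝ}

theorem unitToIcc_image_Icc (hab : a < b) : unitToIcc hab '' Icc 0 1 = Icc a b := by
  rw [unitToIcc, affineHomeomorph_image_Icc _ _ _ _ (sub_pos.2 hab)]
  norm_num

theorem unitToIcc_image_Ioo (hab : a < b) : unitToIcc hab '' Ioo 0 1 = Ioo a b := by
  rw [unitToIcc, affineHomeomorph_image_Ioo _ _ _ _ (sub_pos.2 hab)]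
  norm_num

theorem affineCopy_eq_indicator_symm (hab : a < b) (x : ℝ) :
    affineCopy f a b x = (Icc 0 1).indicator f ((unitToIcc hab).symm x) :=
  rfl

theorem affineCopy_unitToIcc (hab : a < b) (t : ℝ) :
    affineCopy f a b (unitToIcc hab t) = (Icc 0 1).indicator f t := by
  rw [affineCopy_eq_indicator_symm hab, Homeomorph.symm_apply_apply]

theorem affineCopy_eq_zero_of_notMem_Ioo (hab : a < b) (h0 : f 0 = 0) (h1 : f 1 = 0) {x : ℝ}
    (hx : x ∉ Ioo a b) : affineCopy f a b x = 0 := by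
  obtain ⟨t, rfl⟩ := (unitToIcc hab).surjective x
  rw [affineCopy_unitToIcc, indicator_apply_eq_zero]
  intro ht
  have ht' : t ∉ Ioo 0 1 := fun ht' => hx (unitToIcc_image_Ioo hab ▸ mem_image_of_mem _ ht')
  have : t ∈ ({0, 1} : Set ℝ) := Icc_sdiff_Ioo_same (zero_le_one' ℝ) ▸ ⟨ht, ht'⟩
  rcases this with rfl | rfl
  exacts [h0, h1]

theorem abs_affineCopy_le {M : ℝ} (hM : ∀ t ∈ Icc (0 : ℝ) 1, |f t| ≤ M) (x : ℝ) :
    |affineCopy f a b x| ≤ M := by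
  by_cases ht : (x - a) / (b - a) ∈ Icc (0 : ℝ) 1
  · simp only [affineCopy, indicator_of_mem ht]
    exact hM _ ht
  · simp only [affineCopy, indicator_of_notMem ht, abs_zero]
    exact (abs_nonneg _).trans (hM 0 (left_mem_Icc.2 zero_le_one))

theorem rescale_eq_mul_affineCopy (hab : a < b) (f : ℝ → ℝ) :
    rescale f a b = fun x => (b - a) * affineCopy f a b x := by
  funext x
  have hmem : x ∈ Icc a b ↔ (unitToIcc hab).symm x ∈ Icc 0 1 := by
    rw [← unitToIcc_image_Icc hab, Homeomorph.image_eq_preimage_symm, mem_preimage]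
  simp only [rescale, affineCopy_eq_indicator_symm hab, indicator_apply, hmem]
  split_ifs
  exacts [rfl, (mul_zero _).symm]

theorem hasDerivAt_rescale (hab : a < b) {y y' : ℝ → ℝ} (hy : DiffOnIcc y y') (h0 : y 0 = 0)
    (h1 : y 1 = 0) (h0' : y' 0 = 0) (h1' : y' 1 = 0) (x : ℝ) :
    HasDerivAt (rescale y a b) (affineCopy y' a b x) x := by
  have hφ : HasDerivAt (fun x => (x - a) / (b - a)) (1 / (b - a)) x := by
    simpa using ((hasDerivAt_id x).sub_const a).div_const (b - a)
  have hF := hasDerivAt_indicator_of_frontier isClosed_Icc hy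
    (by simp [frontier_Icc zero_le_one, h0, h1]) (by simp [frontier_Icc zero_le_one, h0', h1'])
    ((x - a) / (b - a))
  rw [rescale_eq_mul_affineCopy hab]
  refine ((hF.comp x hφ).const_mul (b - a)).congr_deriv ?_
  field_simp [(sub_pos.2 hab).ne']
  rfl

theorem BaireOne.affineCopy (hf : BaireOne f (Icc 0 1)) (h0 : f 0 = 0) (h1 : f 1 = 0)
    (a b : ℝ) (E : Set ℝ) : BaireOne (affineCopy f a b) E :=
  (hf.indicator_Icc h0 h1).comp_right (by fun_prop) (mapsTo_univ _ _)

variable {c : ℝ}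

theorem discSet_const_mul_affineCopy_image (hc : c ≠ 0) (hab : a < b) {S : Set ℝ}
    (hS : S ⊆ Icc 0 1) :
    discSet (fun x => c * affineCopy f a b x) (unitToIcc hab '' S) =
      unitToIcc hab '' discSet f S := by
  rw [discSet_image_homeomorph, discSet_congr (g := (c * ·) ∘ f),
    discSet_comp_of_isInducing (h := (c * ·)) (Homeomorph.mulLeft₀ c hc).isInducing]
  intro t ht
  simp only [Function.comp_apply, affineCopy_unitToIcc hab, indicator_of_mem (hS ht)]

theorem discSet_const_mul_affineCopy_eq_inter (hab : a < b) (h0 : f 0 = 0) (h1 : f 1 = 0)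
    (c : ℝ) (K : Set ℝ) :
    discSet (fun x => c * affineCopy f a b x) K =
      discSet (fun x => c * affineCopy f a b x) (K ∩ Icc a b) := by
  rw [discSet_eq_discSet_inter_closure isOpen_Ioo (c := 0) (fun x hx => ?_) K, closure_Ioo hab.ne]
  rw [affineCopy_eq_zero_of_notMem_Ioo hab h0 h1 hx, mul_zero]

theorem SolvableOn.const_mul_affineCopy (hf : SolvableOn f (Icc 0 1)) (h0 : f 0 = 0)
    (h1 : f 1 = 0) (hc : c ≠ 0) (hab : a < b) (E : Set ℝ) :
    SolvableOn (fun x => c * affineCopy f a b x) E := by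
  refine ⟨(hf.1.affineCopy h0 h1 a b E).comp_left (continuous_const_mul c), fun K _ hK => ?_⟩
  set ψ := unitToIcc hab
  have hKab : K ∩ Icc a b = ψ '' (ψ ⁻¹' K ∩ Icc 0 1) := by
    rw [image_preimage_inter, unitToIcc_image_Icc]
  rw [discSet_const_mul_affineCopy_eq_inter hab h0 h1, hKab,
    discSet_const_mul_affineCopy_image hc hab inter_subset_right, ψ.isClosed_image]
  exact hf.2 _ inter_subset_right ((hK.preimage ψ.continuous).inter isClosed_Icc)

theorem removedSets_const_mul_affineCopy (h0 : f 0 = 0) (h1 : f 1 = 0) (hc : c ≠ 0)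
    (hab : a < b) (hsub : Icc a b ⊆ Icc 0 1) {α : Ordinal.{0}} (hα : α ≠ 0) :
    removedSets (fun x => c * affineCopy f a b x) (Icc 0 1) α =
      unitToIcc hab '' removedSets f (Icc 0 1) α := by
  rw [removedSets_eq_of_discSet_eq (F := Icc a b) ?_ hα, ← unitToIcc_image_Icc hab,
    removedSets_image (unitToIcc hab).bijective fun S hS =>
      discSet_const_mul_affineCopy_image hc hab hS]
  rw [discSet_const_mul_affineCopy_eq_inter hab h0 h1, inter_eq_right.2 hsub]

theorem solvRank_const_mul_affineCopy (h0 : f 0 = 0) (h1 : f 1 = 0) (hc : c ≠ 0)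
    (hab : a < b) (hsub : Icc a b ⊆ Icc 0 1) :
    solvRank (fun x => c * affineCopy f a b x) = solvRank f := by
  unfold solvRank
  congr 1
  ext α
  rcases eq_or_ne α 0 with rfl | hα
  · simp only [mem_ofPred_eq, removedSets_zero]
  · rw [mem_ofPred_eq, mem_ofPred_eq,
      removedSets_const_mul_affineCopy h0 h1 hc hab hsub hα, image_eq_empty]

end AffineCopy

theorem statement8 (y y' : ℝ → ℝ) (hdiff : DiffOnIcc y y')
    (hbdd : ∃ M : ℝ, ∀ x ∈ Set.Icc (0:ℝ) 1, |y' x| ≤ M)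
    (hsolv : SolvableOn y' (Set.Icc (0:ℝ) 1))
    (h0 : y 0 = 0) (h1 : y 1 = 0) (h0' : y' 0 = 0) (h1' : y' 1 = 0)
    (a b : ℝ) (hab : a < b) (hsub : Set.Icc a b ⊆ Set.Icc (0:ℝ) 1) :
    ∃ g' : ℝ → ℝ,
      DiffOnIcc (fun x => (1/4) * rescale y a b x) g' ∧
      (∃ M : ℝ, ∀ x ∈ Set.Icc (0:ℝ) 1, |g' x| ≤ M) ∧
      SolvableOn g' (Set.Icc (0:ℝ) 1) ∧
      solvRank g' = solvRank y' := by
  obtain ⟨M, hM⟩ := hbdd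
  have hquarter : (1 / 4 : ℝ) ≠ 0 := by norm_num
  refine ⟨fun x => 1 / 4 * affineCopy y' a b x, fun x _ => ?_, ⟨M, fun x _ => ?_⟩,
    hsolv.const_mul_affineCopy h0' h1' hquarter hab _,
    solvRank_const_mul_affineCopy h0' h1' hquarter hab hsub⟩
  · exact ((hasDerivAt_rescale hab hdiff h0 h1 h0' h1' x).const_mul (1 / 4)).hasDerivWithinAt
  · calc |1 / 4 * affineCopy y' a b x| ≤ |affineCopy y' a b x| := by
          rw [abs_mul]
          exact mul_le_of_le_one_left (abs_nonneg _) (by norm_num)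
      _ ≤ M := abs_affineCopy_le hM x
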